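/- Fix c ∈ ℝ and define u : ℝ × ℝ → ℝ by u(x,t) = (4c/3) cos²((x - c t)/4) if |x - c t| ≤ 2π, and u(x,t) = 0 otherwise. Then u is continuously differentiable (C¹) on ℝ × ℝ. -/

import Mathlib

open Real Set Filter

/-- The compacton solution of K(2,2), extended by zero outside its support. -/
noncomputable def compactonExt (c : ℝ) : ℝ × ℝ → ℝ := fun p =>
  if |p.1 - c * p.2| ≤ 2 * Real.pi then
    (4 * c / 3) * (Real.cos ((p.1 - c * p.2) / 4)) ^ 2
  else 0

/-- The one-dimensional profile. -/
noncomputable def cptProfile (c : ℝ) : ℝ → ℝ := fun y =>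
  if |y| ≤ 2 * Real.pi then (4 * c / 3) * (Real.cos (y / 4)) ^ 2 else 0

/-- Its derivative. -/
noncomputable def cptProfile' (c : ℝ) : ℝ → ℝ := fun y =>
  if |y| ≤ 2 * Real.pi then
    (4 * c / 3) * (2 * Real.cos (y / 4) ^ 1 * (-Real.sin (y / 4) * (1 / 4))) else 0

lemma cos_quarter_eq_zero {a : ℝ} (h : |a| = 2 * Real.pi) : Real.cos (a / 4) = 0 := by
  rcases abs_eq (by positivity : (0:ℝ) ≤ 2 * Real.pi) |>.1 h with h' | h' <;> subst h'
  · rw [show (2 * Real.pi) / 4 = Real.pi / 2 by ring, Real.cos_pi_div_two]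
  · rw [show (-(2 * Real.pi)) / 4 = -(Real.pi / 2) by ring, Real.cos_neg, Real.cos_pi_div_two]

lemma hasDerivAt_inner (c a : ℝ) :
    HasDerivAt (fun y => (4 * c / 3) * (Real.cos (y / 4)) ^ 2)
      ((4 * c / 3) * (2 * Real.cos (a / 4) ^ 1 * (-Real.sin (a / 4) * (1 / 4)))) a := by
  have h1 : HasDerivAt (fun y : ℝ => y / 4) (1 / 4) a := by
    simpa using (hasDerivAt_id a).div_const 4
  have h2 : HasDerivAt (fun y : ℝ => Real.cos (y / 4)) (-Real.sin (a / 4) * (1 / 4)) a :=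
    by have := (Real.hasDerivAt_cos (a / 4)).comp a h1; exact this
  exact (h2.pow 2).const_mul (4 * c / 3)

lemma hasDerivAt_cptProfile (c a : ℝ) : HasDerivAt (cptProfile c) (cptProfile' c a) a := by
  rcases lt_trichotomy |a| (2 * Real.pi) with hlt | heq | hgt
  · have hev : cptProfile c =ᶠ[nhds a] fun y => (4 * c / 3) * (Real.cos (y / 4)) ^ 2 := by
      have : ∀ᶠ y in nhds a, |y| < 2 * Real.pi :=
        (continuous_abs.continuousAt (x := a)).eventually_lt continuousAt_const hlt
      filter_upwards [this] with y hy
      simp [cptProfile, hy.le]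
    have := (hasDerivAt_inner c a).congr_of_eventuallyEq hev
    rwa [cptProfile', if_pos hlt.le]
  · -- boundary point
    have hc0 : Real.cos (a / 4) = 0 := cos_quarter_eq_zero heq
    have hG0 : cptProfile' c a = 0 := by simp [cptProfile', hc0]
    rw [hG0]
    have hga : cptProfile c a = 0 := by simp [cptProfile, heq.le, hc0]
    have hfa : (4 * c / 3) * (Real.cos (a / 4)) ^ 2 = 0 := by simp [hc0]
    rcases abs_eq (by positivity : (0:ℝ) ≤ 2 * Real.pi) |>.1 heq with h' | h' <;> subst h'
    · -- a = 2π
      have hL : HasDerivWithinAt (cptProfile c) 0 (Iic (2 * Real.pi)) (2 * Real.pi) := by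
        have hd : HasDerivWithinAt (fun y => (4 * c / 3) * (Real.cos (y / 4)) ^ 2) 0
            (Iic (2 * Real.pi)) (2 * Real.pi) := by
          have := (hasDerivAt_inner c (2 * Real.pi)).hasDerivWithinAt (s := Iic (2 * Real.pi))
          simpa [cos_quarter_eq_zero heq] using this
        refine hd.congr_of_eventuallyEq ?_ (by rw [hga, hfa])
        have hopen : ∀ᶠ y in nhds (2 * Real.pi), -(2 * Real.pi) < y :=
          eventually_gt_nhds (by have := Real.pi_pos; linarith)
        filter_upwards [self_mem_nhdsWithin, hopen.filter_mono nhdsWithin_le_nhds] with y hy1 hy2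
        have : |y| ≤ 2 * Real.pi := abs_le.2 ⟨hy2.le, hy1⟩
        simp [cptProfile, this]
      have hR : HasDerivWithinAt (cptProfile c) 0 (Ici (2 * Real.pi)) (2 * Real.pi) := by
        refine (hasDerivWithinAt_const (2 * Real.pi) (Ici (2 * Real.pi)) (0:ℝ)).congr ?_ hga
        intro y hy
        by_cases h : |y| ≤ 2 * Real.pi
        · have hy' : y = 2 * Real.pi := le_antisymm (le_of_abs_le h) hy
          subst hy'; exact hga
        · simp [cptProfile, h]
      have := hL.union hR
      rw [Iic_union_Ici, hasDerivWithinAt_univ] at this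
      exact this
    · -- a = -2π
      have hL : HasDerivWithinAt (cptProfile c) 0 (Iic (-(2 * Real.pi))) (-(2 * Real.pi)) := by
        refine (hasDerivWithinAt_const _ _ (0:ℝ)).congr ?_ hga
        intro y hy
        by_cases h : |y| ≤ 2 * Real.pi
        · have hy' : y = -(2 * Real.pi) := le_antisymm hy (neg_le_of_abs_le h)
          subst hy'; exact hga
        · simp [cptProfile, h]
      have hR : HasDerivWithinAt (cptProfile c) 0 (Ici (-(2 * Real.pi))) (-(2 * Real.pi)) := by
        have hd : HasDerivWithinAt (fun y => (4 * c / 3) * (Real.cos (y / 4)) ^ 2) 0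
            (Ici (-(2 * Real.pi))) (-(2 * Real.pi)) := by
          have := (hasDerivAt_inner c (-(2 * Real.pi))).hasDerivWithinAt
            (s := Ici (-(2 * Real.pi)))
          simpa [cos_quarter_eq_zero heq] using this
        refine hd.congr_of_eventuallyEq ?_ (by rw [hga, hfa])
        have hopen : ∀ᶠ y in nhds (-(2 * Real.pi)), y < 2 * Real.pi := by
          apply eventually_lt_nhds
          have := Real.pi_pos; linarith
        filter_upwards [self_mem_nhdsWithin, hopen.filter_mono nhdsWithin_le_nhds] with y hy1 hy2
        have : |y| ≤ 2 * Real.pi := abs_le.2 ⟨hy1, hy2.le⟩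
        simp [cptProfile, this]
      have := hL.union hR
      rw [Iic_union_Ici, hasDerivWithinAt_univ] at this
      exact this
  · have hev : cptProfile c =ᶠ[nhds a] fun _ => (0:ℝ) := by
      have : ∀ᶠ y in nhds a, 2 * Real.pi < |y| :=
        continuousAt_const.eventually_lt (continuous_abs.continuousAt (x := a)) hgt
      filter_upwards [this] with y hy
      simp [cptProfile, not_le.2 hy]
    have := (hasDerivAt_const a (0:ℝ)).congr_of_eventuallyEq hev
    rwa [cptProfile', if_neg (not_le.2 hgt)]

lemma continuous_cptProfile' (c : ℝ) : Continuous (cptProfile' c) := by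
  apply Continuous.if
  · intro a ha
    have hset : {y : ℝ | |y| ≤ 2 * Real.pi} = Metric.closedBall (0:ℝ) (2 * Real.pi) := by
      ext y; simp [Real.dist_eq]
    rw [hset, frontier_closedBall _ (by positivity)] at ha
    have habs : |a| = 2 * Real.pi := by
      simpa [Real.dist_eq] using ha
    simp [cos_quarter_eq_zero habs]
  · fun_prop
  · exact continuous_const

theorem stmt3 (c : ℝ) : ContDiff ℝ 1 (compactonExt c) := by
  have hg : ContDiff ℝ 1 (cptProfile c) := by
    rw [contDiff_one_iff_deriv]
    refine ⟨fun a => (hasDerivAt_cptProfile c a).differentiableAt, ?_⟩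
    have : deriv (cptProfile c) = cptProfile' c :=
      funext fun a => (hasDerivAt_cptProfile c a).deriv
    rw [this]
    exact continuous_cptProfile' c
  have hL : ContDiff ℝ 1 (fun p : ℝ × ℝ => p.1 - c * p.2) :=
    contDiff_fst.sub (contDiff_const.mul contDiff_snd)
  exact hg.comp hL
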